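/- Soundness and completeness of the natural deduction calculus NG with respect to NJ plus linearity: for any set Π of propositional formulas and any formula A, Π ⊢ A in NG if and only if Π ⊢ A in intuitionistic natural deduction NJ extended with all instances of the linearity axiom (A→B)∨(B→A). -/
import Mathlib


/-- Propositional formulas with atoms, ⊥, ∧, ∨, →. -/
inductive FormV where
  | atom : ℕ → FormV
  | bot  : FormV
  | conj : FormV → FormV → FormV
  | disj : FormV → FormV → FormV
  | imp  : FormV → FormV → FormV

/-- The natural deduction calculus NG: intuitionistic natural deduction NJ
extended with the (com) rule. -/
inductive NG : Set FormV → FormV → Prop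
  | hyp : A ∈ Γ → NG Γ A
  | impI : NG (insert A Γ) B → NG Γ (.imp A B)
  | impE : NG Γ (.imp A B) → NG Γ A → NG Γ B
  | conjI : NG Γ A → NG Γ B → NG Γ (.conj A B)
  | conjE1 : NG Γ (.conj A B) → NG Γ A
  | conjE2 : NG Γ (.conj A B) → NG Γ B
  | disjI1 : NG Γ A → NG Γ (.disj A B)
  | disjI2 : NG Γ B → NG Γ (.disj A B)
  | disjE : NG Γ (.disj A B) → NG (insert A Γ) C → NG (insert B Γ) C → NG Γ C
  | botE : NG Γ .bot → NG Γ A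
  | com : NG (insert (.imp A B) Γ) C → NG (insert (.imp B A) Γ) C → NG Γ C

/-- NJ plus the linearity axiom scheme (A→B)∨(B→A). -/
inductive NJLin : Set FormV → FormV → Prop
  | hyp : A ∈ Γ → NJLin Γ A
  | impI : NJLin (insert A Γ) B → NJLin Γ (.imp A B)
  | impE : NJLin Γ (.imp A B) → NJLin Γ A → NJLin Γ B
  | conjI : NJLin Γ A → NJLin Γ B → NJLin Γ (.conj A B)
  | conjE1 : NJLin Γ (.conj A B) → NJLin Γ A
  | conjE2 : NJLin Γ (.conj A B) → NJLin Γ B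
  | disjI1 : NJLin Γ A → NJLin Γ (.disj A B)
  | disjI2 : NJLin Γ B → NJLin Γ (.disj A B)
  | disjE : NJLin Γ (.disj A B) → NJLin (insert A Γ) C → NJLin (insert B Γ) C → NJLin Γ C
  | botE : NJLin Γ .bot → NJLin Γ A
  | lin : NJLin Γ (.disj (.imp A B) (.imp B A))

/-- Soundness and completeness of NG w.r.t. NJ + linearity: for any set Pi of
formulas and formula A, Pi ⊢ A in NG iff Pi ⊢ A in NJ + (lin). -/
theorem NG_iff_NJLin (Pi : Set FormV) (A : FormV) :
    NG Pi A ↔ NJLin Pi A := by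
  constructor
  · intro h
    induction h with
    | hyp h => exact NJLin.hyp h
    | impI _ ih => exact NJLin.impI ih
    | impE _ _ ih1 ih2 => exact NJLin.impE ih1 ih2
    | conjI _ _ ih1 ih2 => exact NJLin.conjI ih1 ih2
    | conjE1 _ ih => exact NJLin.conjE1 ih
    | conjE2 _ ih => exact NJLin.conjE2 ih
    | disjI1 _ ih => exact NJLin.disjI1 ih
    | disjI2 _ ih => exact NJLin.disjI2 ih
    | disjE _ _ _ ih1 ih2 ih3 => exact NJLin.disjE ih1 ih2 ih3
    | botE _ ih => exact NJLin.botE ih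
    | com _ _ ih1 ih2 => exact NJLin.disjE NJLin.lin ih1 ih2
  · intro h
    induction h with
    | hyp h => exact NG.hyp h
    | impI _ ih => exact NG.impI ih
    | impE _ _ ih1 ih2 => exact NG.impE ih1 ih2
    | conjI _ _ ih1 ih2 => exact NG.conjI ih1 ih2
    | conjE1 _ ih => exact NG.conjE1 ih
    | conjE2 _ ih => exact NG.conjE2 ih
    | disjI1 _ ih => exact NG.disjI1 ih
    | disjI2 _ ih => exact NG.disjI2 ih
    | disjE _ _ _ ih1 ih2 ih3 => exact NG.disjE ih1 ih2 ih3
    | botE _ ih => exact NG.botE ih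
    | lin =>
      exact NG.com (NG.disjI1 (NG.hyp (Set.mem_insert _ _)))
        (NG.disjI2 (NG.hyp (Set.mem_insert _ _)))
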